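/- Let K be a p-adic field with Haar measure μ normalized so μ(𝒪_K) = 1, and let C = {x ∈ K : α < ord(x − c) < β ∧ x − c ∈ λQ_{n,m}} be a 1-cell with c ∈ K, λ ∈ Kˣ, α < β ∈ ℤ ∪ {±∞}. Then μ(C) = ∑_{γ} q_K^{-(γ+m)} where γ ranges over {γ ∈ ℤ : α < γ < β, γ ≡ ord(λ) mod n}; in particular, if β = ∞ and α ≥ some integer, μ(C) is a finite geometric-type sum equal to a rational multiple of q_K^{-α}. -/

import Mathlib

/-!
For `ord z = k` the condition `ac_m(z) = 1` reads `‖z - p^k‖ ≤ p^{-(k+m)}`, and since `m > 0` this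
ball lies in the sphere `‖z‖ = p^{-k}`. Hence each leaf `{x : ord(x - c) = γ, x - c ∈ λ Q_{n,m}}` is
empty unless `n ∣ γ - ord λ`, and otherwise is a closed ball of radius `p^{-(γ+m)}`. A closed ball
of radius `p^{-k}` is the disjoint union of `p` translates of a ball of radius `p^{-(k+1)}`, so
translation invariance and `μ(ℤ_p) = 1` give it measure `p^{-k}`. The cell is the disjoint union
of its leaves, so its measure is the sum of the leaf measures.
-/

open MeasureTheory

/-- The set `Q_{n,m} = {y ∈ Kˣ : n ∣ ord(y), ac_m(y) = 1}` inside `K = ℚ_p`. -/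
def QSet (p : ℕ) [Fact p.Prime] (n m : ℕ) : Set ℚ_[p] :=
  {y : ℚ_[p] | y ≠ 0 ∧ (n : ℤ) ∣ y.valuation ∧
    ‖y * (p : ℚ_[p]) ^ (-y.valuation) - 1‖ ≤ (p : ℝ) ^ (-(m : ℤ))}

open Metric
open scoped ENNReal

theorem measure_closedBall_eq_measure_closedBall_zero {G : Type*} [SeminormedAddGroup G]
    [MeasurableSpace G] [MeasurableAdd G] (μ : Measure G) [μ.IsAddLeftInvariant]
    (a : G) (r : ℝ) : μ (closedBall a r) = μ (closedBall 0 r) := by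
  rw [← measure_preimage_add μ (-a) (closedBall 0 r), preimage_add_left_closedBall, neg_neg,
    add_zero]

theorem preimage_inv_mul_sub_closedBall {K : Type*} [NormedField K] {a : K} (ha : a ≠ 0)
    (c b : K) (r : ℝ) :
    (fun x ↦ a⁻¹ * (x - c)) ⁻¹' closedBall b r = closedBall (c + a * b) (‖a‖ * r) := by
  ext x
  have hx : x - (c + a * b) = a * (a⁻¹ * (x - c) - b) := by field_simp; ring
  rw [Set.mem_preimage, mem_closedBall, mem_closedBall, dist_eq_norm, dist_eq_norm, hx, norm_mul,
    mul_le_mul_iff_right₀ (norm_pos_iff.mpr ha)]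

namespace Padic

variable {p : ℕ} [Fact p.Prime]

theorem one_lt_p : (1 : ℝ) < p := by exact_mod_cast (Fact.out : p.Prime).one_lt

theorem norm_natCast_sub_natCast_eq_one {i j : ℕ} (hi : i < p) (hj : j < p) (hij : i ≠ j) :
    ‖(i - j : ℚ_[p])‖ = 1 := by
  have hndvd : ¬ (p : ℤ) ∣ (i - j : ℤ) := fun h ↦
    hij (by have := Int.eq_zero_of_abs_lt_dvd h (by rw [abs_lt]; omega); omega)
  have hcast : (i - j : ℚ_[p]) = ((i - j : ℤ) : ℚ_[p]) := by push_cast; rfl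
  rw [hcast]
  exact (norm_int_le_one _).eq_or_lt.resolve_right (mt norm_intCast_lt_one_iff.mp hndvd)

theorem closedBall_zero_zpow_eq_biUnion (k : ℤ) :
    closedBall (0 : ℚ_[p]) (p ^ (-k)) =
      ⋃ i ∈ Finset.range p, closedBall ((i : ℚ_[p]) * p ^ k) (p ^ (-(k + 1))) := by
  have hp : (p : ℚ_[p]) ≠ 0 := by exact_mod_cast (Fact.out : p.Prime).ne_zero
  have hp0 : (0 : ℝ) < p := zero_lt_one.trans one_lt_p
  ext x
  simp only [mem_closedBall, dist_eq_norm, sub_zero, Set.mem_iUnion, Finset.mem_range,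
    exists_prop]
  constructor
  · intro hx
    have hy : ‖x * p ^ (-k)‖ ≤ 1 := by
      rw [norm_mul, norm_p_zpow, neg_neg, ← le_div_iff₀ (zpow_pos hp0 _), one_div, ← zpow_neg]
      exact hx
    set z : ℤ_[p] := ⟨_, hy⟩
    obtain ⟨i, hi, hzi⟩ := PadicInt.exists_mem_range z
    refine ⟨i, hi, ?_⟩
    have hxi : ‖x * p ^ (-k) - i‖ ≤ p ^ (-1 : ℤ) := by
      have h := (PadicInt.norm_le_pow_iff_norm_lt_pow_add_one (z - (i : ℤ_[p])) (-1)).mpr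
        (by rw [neg_add_cancel, zpow_zero]; exact PadicInt.mem_nonunits.mp hzi)
      rwa [PadicInt.norm_def, PadicInt.coe_sub, PadicInt.coe_natCast] at h
    calc ‖x - i * p ^ k‖ = ‖x * p ^ (-k) - i‖ * ‖(p : ℚ_[p]) ^ k‖ := by
          rw [← norm_mul, sub_mul, zpow_neg, inv_mul_cancel_right₀ (zpow_ne_zero _ hp)]
      _ ≤ p ^ (-1 : ℤ) * p ^ (-k) := by
          rw [norm_p_zpow]; gcongr
      _ = p ^ (-(k + 1)) := by rw [← zpow_add₀ hp0.ne']; ring_nf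
  · rintro ⟨i, -, hxi⟩
    have hi : ‖(i : ℚ_[p]) * p ^ k‖ ≤ p ^ (-k) := by
      rw [norm_mul, norm_p_zpow]
      exact mul_le_of_le_one_left (by positivity) (IsUltrametricDist.norm_natCast_le_one _ i)
    calc ‖x‖ = ‖(x - i * p ^ k) + i * p ^ k‖ := by rw [sub_add_cancel]
      _ ≤ max ‖x - i * p ^ k‖ ‖(i : ℚ_[p]) * p ^ k‖ := IsUltrametricDist.norm_add_le_max _ _
      _ ≤ p ^ (-k) := max_le (hxi.trans (zpow_le_zpow_right₀ one_lt_p.le (by omega))) hi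

theorem pairwiseDisjoint_closedBall_natCast_mul_zpow (k : ℤ) :
    (Finset.range p : Set ℕ).PairwiseDisjoint
      fun i ↦ closedBall ((i : ℚ_[p]) * p ^ k) (p ^ (-(k + 1))) := by
  intro i hi j hj hij
  refine Set.disjoint_left.mpr fun x hxi hxj ↦ ?_
  have hdist : dist ((i : ℚ_[p]) * p ^ k) (j * p ^ k) = p ^ (-k) := by
    rw [dist_eq_norm, ← sub_mul, norm_mul, norm_p_zpow,
      norm_natCast_sub_natCast_eq_one (Finset.mem_range.mp hi) (Finset.mem_range.mp hj) hij, one_mul]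
  have hle : (p : ℝ) ^ (-k) ≤ p ^ (-(k + 1)) := by
    rw [← hdist]
    exact (IsUltrametricDist.dist_triangle_max _ x _).trans
      (max_le (by rw [dist_comm]; exact hxi) hxj)
  have := (zpow_le_zpow_iff_right₀ one_lt_p).mp hle
  omega

section Measure

variable [MeasurableSpace ℚ_[p]] [BorelSpace ℚ_[p]] (μ : Measure ℚ_[p]) [μ.IsAddLeftInvariant]

theorem measure_closedBall_zero_zpow_eq_mul (k : ℤ) :
    μ (closedBall 0 (p ^ (-k))) = p * μ (closedBall 0 (p ^ (-(k + 1)))) := by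
  rw [closedBall_zero_zpow_eq_biUnion, measure_biUnion_finset
      (pairwiseDisjoint_closedBall_natCast_mul_zpow k) fun _ _ ↦ measurableSet_closedBall]
  simp_rw [measure_closedBall_eq_measure_closedBall_zero μ _ (p ^ (-(k + 1)) : ℝ)]
  rw [Finset.sum_const, Finset.card_range, nsmul_eq_mul]

theorem measure_closedBall_zpow (hμ : μ (closedBall 0 1) = 1) (a : ℚ_[p]) (k : ℤ) :
    μ (closedBall a (p ^ (-k))) = (p : ℝ≥0∞) ^ (-k) := by
  have hp0 : (p : ℝ≥0∞) ≠ 0 := by exact_mod_cast (Fact.out : p.Prime).ne_zero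
  have hpt : (p : ℝ≥0∞) ≠ ⊤ := ENNReal.natCast_ne_top p
  rw [measure_closedBall_eq_measure_closedBall_zero]
  induction k using Int.induction_on with
  | zero => simpa using hμ
  | succ k ih =>
    rw [← ENNReal.mul_right_inj hp0 hpt, ← measure_closedBall_zero_zpow_eq_mul, ih,
      show -(k : ℤ) = 1 + -(k + 1) by ring, ENNReal.zpow_add hp0 hpt, zpow_one]
  | pred k ih =>
    rw [measure_closedBall_zero_zpow_eq_mul, sub_add_cancel, ih,
      show -(-(k : ℤ) - 1) = 1 + - -k by ring, ENNReal.zpow_add hp0 hpt, zpow_one]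

end Measure

theorem valuation_eq_of_norm_eq {x : ℚ_[p]} (hx : x ≠ 0) {k : ℤ} (h : ‖x‖ = p ^ (-k)) :
    x.valuation = k := by
  rw [norm_eq_zpow_neg_valuation hx] at h
  exact neg_injective (zpow_right_injective₀ (zero_lt_one.trans one_lt_p) one_lt_p.ne' h)

theorem norm_mul_zpow_neg_sub_one (z : ℚ_[p]) (k : ℤ) :
    ‖z * p ^ (-k) - 1‖ = p ^ k * ‖z - p ^ k‖ := by
  have hp : (p : ℚ_[p]) ≠ 0 := by exact_mod_cast (Fact.out : p.Prime).ne_zero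
  calc ‖z * p ^ (-k) - 1‖ = ‖(z - p ^ k) * p ^ (-k)‖ := by
        rw [sub_mul, zpow_neg, mul_inv_cancel₀ (zpow_ne_zero _ hp)]
    _ = p ^ k * ‖z - p ^ k‖ := by rw [norm_mul, norm_p_zpow, neg_neg, mul_comm]

end Padic

namespace QSet

open Padic

variable {p : ℕ} [Fact p.Prime] {n m : ℕ}

theorem inter_setOf_valuation_eq_closedBall (hm : 0 < m) {k : ℤ} (hk : (n : ℤ) ∣ k) :
    QSet p n m ∩ {z | z.valuation = k} = closedBall ((p : ℚ_[p]) ^ k) (p ^ (-(k + m))) := by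
  have hp0 : (0 : ℝ) < p := zero_lt_one.trans one_lt_p
  have hradius : (p : ℝ) ^ (-(k + m)) = p ^ (-(m : ℤ)) / p ^ k := by
    rw [← zpow_sub₀ hp0.ne']; ring_nf
  ext z
  rw [mem_closedBall, dist_eq_norm, hradius, le_div_iff₀' (zpow_pos hp0 _),
    ← norm_mul_zpow_neg_sub_one]
  constructor
  · rintro ⟨⟨-, -, hz⟩, rfl : z.valuation = k⟩
    exact hz
  · intro hz
    have hlt : ‖z - p ^ k‖ < ‖(p : ℚ_[p]) ^ k‖ := by
      rw [norm_mul_zpow_neg_sub_one, ← le_div_iff₀' (zpow_pos hp0 _), ← hradius] at hz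
      rw [norm_p_zpow]
      exact hz.trans_lt (zpow_lt_zpow_right₀ one_lt_p (by omega))
    have hnorm : ‖z‖ = p ^ (-k) := by
      rw [← sub_add_cancel z (p ^ k), IsUltrametricDist.norm_add_eq_max_of_norm_ne_norm hlt.ne,
        max_eq_right hlt.le, norm_p_zpow]
    have hz0 : z ≠ 0 := norm_ne_zero_iff.mp (by rw [hnorm]; exact (zpow_pos hp0 _).ne')
    have hval := valuation_eq_of_norm_eq hz0 hnorm
    exact ⟨⟨hz0, hval ▸ hk, hval ▸ hz⟩, hval⟩

theorem inter_setOf_valuation_eq_empty {k : ℤ} (hk : ¬ (n : ℤ) ∣ k) :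
    QSet p n m ∩ {z | z.valuation = k} = ∅ :=
  Set.eq_empty_iff_forall_notMem.mpr fun _ ⟨⟨_, hdvd, _⟩, hval⟩ ↦ hk (hval ▸ hdvd)

theorem setOf_valuation_sub_eq_eq_preimage {lam : ℚ_[p]} (hlam : lam ≠ 0) (c : ℚ_[p]) (γ : ℤ) :
    {x | (x - c).valuation = γ ∧ ∃ z ∈ QSet p n m, x - c = lam * z} =
      (fun x ↦ lam⁻¹ * (x - c)) ⁻¹' (QSet p n m ∩ {z | z.valuation = γ - lam.valuation}) := by
  ext x
  simp only [Set.mem_ofPred_eq, Set.mem_preimage, Set.mem_inter_iff]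
  constructor
  · rintro ⟨hval, z, hz, hxz⟩
    rw [hxz, inv_mul_cancel_left₀ hlam]
    refine ⟨hz, ?_⟩
    rw [hxz, valuation_mul hlam hz.1] at hval
    omega
  · rintro ⟨hz, hval⟩
    have hxz : x - c = lam * (lam⁻¹ * (x - c)) := (mul_inv_cancel_left₀ hlam _).symm
    refine ⟨?_, _, hz, hxz⟩
    rw [hxz, valuation_mul hlam hz.1, hval]
    omega

section Measure

variable [MeasurableSpace ℚ_[p]] [BorelSpace ℚ_[p]]

theorem measurableSet_inter_setOf_valuation_eq (hm : 0 < m) (k : ℤ) :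
    MeasurableSet (QSet p n m ∩ {z | z.valuation = k}) := by
  by_cases hk : (n : ℤ) ∣ k
  · rw [inter_setOf_valuation_eq_closedBall hm hk]
    exact measurableSet_closedBall
  · rw [inter_setOf_valuation_eq_empty hk]
    exact MeasurableSet.empty

variable (μ : Measure ℚ_[p]) [μ.IsAddLeftInvariant]

theorem measure_setOf_valuation_sub_eq (hm : 0 < m) (hμ : μ (closedBall 0 1) = 1)
    {lam : ℚ_[p]} (hlam : lam ≠ 0) (c : ℚ_[p]) (γ : ℤ) :
    μ {x | (x - c).valuation = γ ∧ ∃ z ∈ QSet p n m, x - c = lam * z} =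
      if (n : ℤ) ∣ γ - lam.valuation then (p : ℝ≥0∞) ^ (-(γ + m)) else 0 := by
  have hp0 : (p : ℝ) ≠ 0 := by exact_mod_cast (Fact.out : p.Prime).ne_zero
  rw [setOf_valuation_sub_eq_eq_preimage hlam]
  split_ifs with hk
  · rw [inter_setOf_valuation_eq_closedBall hm hk, preimage_inv_mul_sub_closedBall hlam,
      norm_eq_zpow_neg_valuation hlam, ← zpow_add₀ hp0,
      show -lam.valuation + -(γ - lam.valuation + m) = -(γ + m) by ring,
      measure_closedBall_zpow μ hμ]
  · rw [inter_setOf_valuation_eq_empty hk, Set.preimage_empty, measure_empty]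

theorem measure_setOf_valuation_sub_mem (hm : 0 < m) (hμ : μ (closedBall 0 1) = 1)
    {lam : ℚ_[p]} (hlam : lam ≠ 0) (c : ℚ_[p]) (s : Set ℤ) :
    μ {x | (x - c).valuation ∈ s ∧ ∃ z ∈ QSet p n m, x - c = lam * z} =
      ∑' γ : s, if (n : ℤ) ∣ γ - lam.valuation then (p : ℝ≥0∞) ^ (-((γ : ℤ) + m)) else 0 := by
  have hunion : {x | (x - c).valuation ∈ s ∧ ∃ z ∈ QSet p n m, x - c = lam * z} =
      ⋃ γ ∈ s, {x | (x - c).valuation = γ ∧ ∃ z ∈ QSet p n m, x - c = lam * z} := by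
    ext; simp
  rw [hunion, measure_biUnion s.to_countable]
  · simp_rw [measure_setOf_valuation_sub_eq μ hm hμ hlam]
  · exact fun γ _ γ' _ hne ↦ Set.disjoint_left.mpr fun x hx hx' ↦ hne (hx.1.symm.trans hx'.1)
  · intro γ _
    rw [setOf_valuation_sub_eq_eq_preimage hlam]
    exact (measurableSet_inter_setOf_valuation_eq hm _).preimage (by fun_prop)

end Measure

end QSet

theorem stmt_14_general (p n m : ℕ) [Fact p.Prime] (hm : 0 < m)
    [MeasurableSpace ℚ_[p]] [BorelSpace ℚ_[p]]
    (μ : Measure ℚ_[p]) [μ.IsAddLeftInvariant]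
    (hμ : μ {x : ℚ_[p] | ‖x‖ ≤ 1} = 1)
    (c lam : ℚ_[p]) (hlam : lam ≠ 0) (α β : ℤ) :
    μ {x : ℚ_[p] | α < (x - c).valuation ∧ (x - c).valuation < β ∧
        ∃ z ∈ QSet p n m, x - c = lam * z}
      = ∑ γ ∈ (Finset.Ioo α β).filter (fun γ => (n : ℤ) ∣ (γ - lam.valuation)),
          (p : ENNReal) ^ (-(γ + (m : ℤ))) ∧
    μ {x : ℚ_[p] | α < (x - c).valuation ∧ ∃ z ∈ QSet p n m, x - c = lam * z}
      = ∑' γ : ℤ, if α < γ ∧ (n : ℤ) ∣ (γ - lam.valuation)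
          then (p : ENNReal) ^ (-(γ + (m : ℤ))) else 0 := by
  have hμ' : μ (closedBall 0 1) = 1 := by simpa [closedBall, dist_eq_norm] using hμ
  have hcell := QSet.measure_setOf_valuation_sub_mem μ hm hμ' hlam c (n := n)
  constructor
  · have h := hcell (Set.Ioo α β)
    simp only [Set.mem_Ioo, and_assoc] at h
    rw [h, ← Finset.coe_Ioo, Finset.sum_filter, ← Finset.tsum_subtype]
    rfl
  · have h := hcell (Set.Ioi α)
    simp only [Set.mem_Ioi] at h
    rw [h, tsum_subtype (Set.Ioi α) fun γ ↦
      if (n : ℤ) ∣ γ - lam.valuation then (p : ℝ≥0∞) ^ (-(γ + m)) else 0]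
    simp only [Set.indicator_apply, Set.mem_Ioi, ite_and]

/-- the Haar measure of the 1-cell
`C = {x : α < ord(x−c) < β ∧ x−c ∈ λQ_{n,m}}` equals `∑_γ q_K^{-(γ+m)}`, the sum over
admissible heights `γ` (those with `α < γ < β` and `γ ≡ ord λ mod n`); and for the
unbounded cell (`β = ∞`) the analogous summation formula holds. -/
theorem stmt_14 (p n m : ℕ) [Fact p.Prime] (hn : 0 < n) (hm : 0 < m)
    [MeasurableSpace ℚ_[p]] [BorelSpace ℚ_[p]]
    (μ : Measure ℚ_[p]) [μ.IsAddLeftInvariant]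
    (hμ : μ {x : ℚ_[p] | ‖x‖ ≤ 1} = 1)
    (c lam : ℚ_[p]) (hlam : lam ≠ 0) (α β : ℤ) (hαβ : α < β) :
    μ {x : ℚ_[p] | α < (x - c).valuation ∧ (x - c).valuation < β ∧
        ∃ z ∈ QSet p n m, x - c = lam * z}
      = ∑ γ ∈ (Finset.Ioo α β).filter (fun γ => (n : ℤ) ∣ (γ - lam.valuation)),
          (p : ENNReal) ^ (-(γ + (m : ℤ))) ∧
    μ {x : ℚ_[p] | α < (x - c).valuation ∧ ∃ z ∈ QSet p n m, x - c = lam * z}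
      = ∑' γ : ℤ, if α < γ ∧ (n : ℤ) ∣ (γ - lam.valuation)
          then (p : ENNReal) ^ (-(γ + (m : ℤ))) else 0 :=
  stmt_14_general p n m hm μ hμ c lam hlam α β
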